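/- arXiv:1808.03882 — 2 statements merged into one kernel-verified Lean document; each statement's English description precedes it below -/
import Mathlib

section
/- For ν not a negative integer, J_ν(z) = (z/2)^ν/Γ(ν+1) · (1+θ) where |θ| ≤ exp(|z|²/(4|ν₀+1|)) − 1, and |ν₀+1| denotes the minimum of |ν+1|, |ν+2|, |ν+3|, …. -/
open Complex MeasureTheory Real Filter ComplexConjugate

/-- Bessel function of the first kind, defined by its power series. -/
noncomputable def besselJ (ν z : ℂ) : ℂ :=
  ∑' n : ℕ, ((-1 : ℂ) ^ n * (z / 2) ^ (ν + 2 * (n : ℂ))) /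
    ((n.factorial : ℂ) * Complex.Gamma (ν + (n : ℂ) + 1))

/-- The product Bessel function `J_{μ,m}(z) = J_{−μ−m/2}(z) · J_{−μ+m/2}(z̄)`. -/
noncomputable def besselJC (μ : ℂ) (m : ℤ) (z : ℂ) : ℂ :=
  besselJ (-μ - (m : ℂ) / 2) z * besselJ (-μ + (m : ℂ) / 2) (conj z)

/-- The Bessel function `𝕁_{μ,m}` for `SL₂(ℂ)`. -/
noncomputable def JJ (μ : ℂ) (m : ℤ) (z : ℂ) : ℂ :=
  if Even m then
    (besselJC μ m z - besselJC (-μ) (-m) z) / Complex.sin ((Real.pi : ℂ) * μ)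
  else
    (besselJC μ m z + besselJC (-μ) (-m) z) / (Complex.I * Complex.cos ((Real.pi : ℂ) * μ))

/-- The Wirtinger derivative `∂/∂z = (∂/∂x − i ∂/∂y)/2`. -/
noncomputable def wdz (f : ℂ → ℂ) (z : ℂ) : ℂ :=
  (fderiv ℝ f z 1 - Complex.I * fderiv ℝ f z Complex.I) / 2

/-- The conjugate Wirtinger derivative `∂/∂z̄ = (∂/∂x + i ∂/∂y)/2`. -/
noncomputable def wdzbar (f : ℂ → ℂ) (z : ℂ) : ℂ :=
  (fderiv ℝ f z 1 + Complex.I * fderiv ℝ f z Complex.I) / 2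

/-- The operator `∇ = (z ∂/∂z)² + z²`. -/
noncomputable def nabla (f : ℂ → ℂ) (z : ℂ) : ℂ :=
  z * wdz (fun w => w * wdz f w) z + z ^ 2 * f z

/-- The operator `∇̄ = (z̄ ∂/∂z̄)² + z̄²`. -/
noncomputable def nablaBar (f : ℂ → ℂ) (z : ℂ) : ℂ :=
  conj z * wdzbar (fun w => conj w * wdzbar f w) z + (conj z) ^ 2 * f z

/-- `|ν₀ + 1| = min {|ν+1|, |ν+2|, |ν+3|, …}`. -/
noncomputable def nuZero (ν : ℂ) : ℝ := ⨅ n : ℕ, ‖ν + (n : ℂ) + 1‖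

/-! Factoring `(z/2)^ν / Γ(ν+1)` out of the series leaves `∑ (-(z/2)²)^n / (n! (ν+1)_n)`, where
the Pochhammer symbol `(ν+1)_n = Γ(ν+n+1) / Γ(ν+1)` is a product of `n` factors `ν+k+1`, each of
modulus at least `|ν₀+1|`. Hence the `n`-th term is at most `x^n / n!` with
`x = |z|² / (4|ν₀+1|)`, and `θ`, the sum of the terms with `n ≥ 1`, is at most `eˣ - 1`. -/

open Nat

lemma Complex.cpow_add_natCast {w : ℂ} (ν : ℂ) (n : ℕ) (h : w = 0 → 0 < n → ν + n ≠ 0) :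
    w ^ (ν + n) = w ^ ν * w ^ n := by
  rcases eq_or_ne w 0 with rfl | hw
  · rcases n.eq_zero_or_pos with rfl | hn
    · simp
    · rw [zero_cpow (h rfl hn), zero_pow hn.ne', mul_zero]
  · rw [cpow_add _ _ hw, cpow_natCast]

lemma Real.hasSum_pow_succ_div_factorial (x : ℝ) :
    HasSum (fun n : ℕ => x ^ (n + 1) / (n + 1)!) (Real.exp x - 1) := by
  rw [Real.exp_eq_exp_ℝ]
  simpa using (hasSum_nat_add_iff' 1).mpr (NormedSpace.expSeries_div_hasSum_exp x)

lemma norm_tsum_succ_le_exp_sub_one {E : Type*} [NormedAddCommGroup E] {f : ℕ → E} {x : ℝ}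
    (hf : ∀ n, ‖f n‖ ≤ x ^ n / n !) : ‖∑' n, f (n + 1)‖ ≤ Real.exp x - 1 :=
  tsum_of_norm_bounded (Real.hasSum_pow_succ_div_factorial x) fun n => hf (n + 1)

lemma nuZero_nonneg (ν : ℂ) : 0 ≤ nuZero ν :=
  Real.iInf_nonneg fun _ => norm_nonneg _

lemma nuZero_le (ν : ℂ) (n : ℕ) : nuZero ν ≤ ‖ν + n + 1‖ :=
  ciInf_le ⟨0, by rintro _ ⟨k, rfl⟩; exact norm_nonneg _⟩ n

lemma tendsto_norm_add_natCast_add_one (ν : ℂ) :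
    Tendsto (fun n : ℕ => ‖ν + n + 1‖) atTop atTop := by
  refine tendsto_atTop_mono (fun n : ℕ => ?_)
    (tendsto_atTop_add_const_right _ (1 - ‖ν‖) tendsto_natCast_atTop_atTop)
  have h := norm_sub_norm_le ((n + 1 : ℝ) : ℂ) (-ν)
  rw [norm_neg, Complex.norm_real, Real.norm_of_nonneg (by positivity),
    show ((n + 1 : ℝ) : ℂ) - -ν = ν + n + 1 by push_cast; ring] at h
  linarith

lemma nuZero_pos {ν : ℂ} (hν : ∀ k : ℕ, ν + 1 ≠ -k) : 0 < nuZero ν := by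
  obtain ⟨n₀, hn₀⟩ :=
    (Nat.cofinite_eq_atTop ▸ tendsto_norm_add_natCast_add_one ν).exists_forall_le
  refine (norm_pos_iff.mpr fun h => hν n₀ ?_).trans_le (le_ciInf hn₀)
  linear_combination h

lemma pow_nuZero_le_norm_ascPochhammer_eval (ν : ℂ) (n : ℕ) :
    nuZero ν ^ n ≤ ‖(ascPochhammer ℂ n).eval (ν + 1)‖ := by
  induction n with
  | zero => simp
  | succ n ih =>
    rw [pow_succ, ascPochhammer_succ_eval, norm_mul, add_right_comm]
    exact mul_le_mul ih (nuZero_le ν n) (nuZero_nonneg ν) (norm_nonneg _)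

noncomputable def normalizedBesselTerm (ν z : ℂ) (n : ℕ) : ℂ :=
  (-(z / 2) ^ 2) ^ n / (n ! * (ascPochhammer ℂ n).eval (ν + 1))

lemma normalizedBesselTerm_zero (ν z : ℂ) : normalizedBesselTerm ν z 0 = 1 := by
  simp [normalizedBesselTerm]

lemma besselJ_term_eq {ν : ℂ} (hν : ∀ k : ℕ, ν + 1 ≠ -k) (z : ℂ) (n : ℕ) :
    (-1) ^ n * (z / 2) ^ (ν + 2 * n) / (n ! * Complex.Gamma (ν + n + 1)) =
      (z / 2) ^ ν / Complex.Gamma (ν + 1) * normalizedBesselTerm ν z n := by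
  have hΓ : Complex.Gamma (ν + 1 + n) =
      Complex.Gamma (ν + 1) * (ascPochhammer ℂ n).eval (ν + 1) := by
    rw [← Complex.Gamma_add_nat_div_Gamma_eq _ hν,
      mul_div_cancel₀ _ (Complex.Gamma_ne_zero hν)]
  -- at `z = 0` this needs `ν + 2n ≠ 0`, because `0 ^ (0 : ℂ) = 1`
  have hpow : (z / 2) ^ (ν + 2 * n) = (z / 2) ^ ν * ((z / 2) ^ 2) ^ n := by
    rw [← pow_mul, ← Complex.cpow_add_natCast]
    · push_cast; rfl
    · intro _ hn h
      apply hν (2 * n - 1)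
      rw [Nat.cast_pred hn]
      linear_combination h
  rw [add_right_comm, hΓ, hpow, normalizedBesselTerm, neg_pow ((z / 2) ^ 2)]
  ring

lemma norm_normalizedBesselTerm_le {ν : ℂ} (hν : ∀ k : ℕ, ν + 1 ≠ -k) (z : ℂ) (n : ℕ) :
    ‖normalizedBesselTerm ν z n‖ ≤ (‖z‖ ^ 2 / (4 * nuZero ν)) ^ n / n ! := by
  have hc := nuZero_pos hν
  calc ‖normalizedBesselTerm ν z n‖
      = (‖z‖ ^ 2 / 4) ^ n / (n ! * ‖(ascPochhammer ℂ n).eval (ν + 1)‖) := by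
        simp only [normalizedBesselTerm, div_pow, norm_div, norm_pow, norm_neg, norm_mul,
          Complex.norm_ofNat, Complex.norm_natCast]
        norm_num
    _ ≤ (‖z‖ ^ 2 / 4) ^ n / (n ! * nuZero ν ^ n) := by
        gcongr; exact pow_nuZero_le_norm_ascPochhammer_eval ν n
    _ = (‖z‖ ^ 2 / (4 * nuZero ν)) ^ n / n ! := by
        rw [mul_comm (n ! : ℝ), ← div_div, ← div_pow, div_div]

/-- `J_ν(z) = (z/2)^ν/Γ(ν+1) · (1+θ)` with
`|θ| ≤ exp(|z|²/(4|ν₀+1|)) − 1`. -/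
theorem besselJ_leading_term (ν : ℂ) (hν : ∀ n : ℕ, ν ≠ -((n : ℂ) + 1)) (z : ℂ) :
    ∃ θ : ℂ, besselJ ν z = (z / 2) ^ ν / Complex.Gamma (ν + 1) * (1 + θ) ∧
      ‖θ‖ ≤ Real.exp (‖z‖ ^ 2 / (4 * nuZero ν)) - 1 := by
  have hν' : ∀ k : ℕ, ν + 1 ≠ -k := fun k h => hν k (by linear_combination h)
  have hbound := norm_normalizedBesselTerm_le hν' z
  refine ⟨∑' n, normalizedBesselTerm ν z (n + 1), ?_, norm_tsum_succ_le_exp_sub_one hbound⟩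
  rw [besselJ, tsum_congr (besselJ_term_eq hν' z), tsum_mul_left,
    (Summable.of_norm_bounded (Real.summable_pow_div_factorial _) hbound).tsum_eq_zero_add,
    normalizedBesselTerm_zero]
end

section
/- Let 𝒱 be the space of functions on ℂ \ {0} of the form G(z) = e((z+z̄)/2π)|z|^{−1}H₊(1/z) + e(−(z+z̄)/2π)|z|^{−1}H₋(1/z) with H₊, H₋ ∈ C_c^∞(ℂ). Then 𝒱 is stable under the operator ∇ = (z ∂/∂z)² + z². -/
open Complex MeasureTheory Real Filter ComplexConjugate

/-- The space `𝒱` of functions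
`G(z) = e((z+z̄)/2π)|z|⁻¹H₊(1/z) + e(−(z+z̄)/2π)|z|⁻¹H₋(1/z)`,
`H₊, H₋ ∈ C_c^∞(ℂ)` (note `e((z+z̄)/2π) = exp(i(z+z̄))`). -/
def memV (G : ℂ → ℂ) : Prop :=
  ∃ Hp Hm : ℂ → ℂ, ContDiff ℝ (⊤ : ℕ∞) Hp ∧ ContDiff ℝ (⊤ : ℕ∞) Hm ∧
    HasCompactSupport Hp ∧ HasCompactSupport Hm ∧
    ∀ z : ℂ, z ≠ 0 →
      G z = Complex.exp (Complex.I * (z + conj z)) / ((‖z‖ : ℝ) : ℂ) * Hp z⁻¹ +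
        Complex.exp (-(Complex.I * (z + conj z))) / ((‖z‖ : ℝ) : ℂ) * Hm z⁻¹

/-! ### Wirtinger calculus toolkit -/

lemma wdz_congr {f g : ℂ → ℂ} {z : ℂ} (h : f =ᶠ[nhds z] g) : wdz f z = wdz g z := by
  unfold wdz; rw [h.fderiv_eq]

lemma HasFDerivAt.wdz_eq {f : ℂ → ℂ} {L : ℂ →L[ℝ] ℂ} {z : ℂ} (h : HasFDerivAt f L z) :
    wdz f z = (L 1 - Complex.I * L Complex.I) / 2 := by
  unfold wdz; rw [h.fderiv]

lemma clm_apply_eq (L : ℂ →L[ℝ] ℂ) (v : ℂ) :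
    L v = (v.re : ℂ) * L 1 + (v.im : ℂ) * L Complex.I := by
  have h : v = (v.re : ℝ) • (1:ℂ) + (v.im : ℝ) • Complex.I := by
    rw [Complex.real_smul, Complex.real_smul]; simp [Complex.re_add_im]
  calc L v = L ((v.re : ℝ) • (1:ℂ) + (v.im : ℝ) • Complex.I) := by rw [← h]
    _ = _ := by rw [map_add, _root_.map_smul, _root_.map_smul, Complex.real_smul, Complex.real_smul]

lemma clin_key (L : ℂ →L[ℝ] ℂ) (c : ℂ) :
    L c - Complex.I * L (c * Complex.I) = c * (L 1 - Complex.I * L Complex.I) := by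
  rw [clm_apply_eq L c, clm_apply_eq L (c * Complex.I)]
  simp only [Complex.mul_re, Complex.mul_im, Complex.I_re, Complex.I_im]
  push_cast
  linear_combination ((c.im:ℂ) * L Complex.I) * Complex.I_sq +
    (L 1 - Complex.I * L Complex.I) * (Complex.re_add_im c)

lemma wdz_add {f g : ℂ → ℂ} {z : ℂ} (hf : DifferentiableAt ℝ f z)
    (hg : DifferentiableAt ℝ g z) :
    wdz (fun w => f w + g w) z = wdz f z + wdz g z := by
  unfold wdz
  rw [fderiv_fun_add hf hg]
  simp only [ContinuousLinearMap.add_apply]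
  ring

lemma wdz_mul {f g : ℂ → ℂ} {z : ℂ} (hf : DifferentiableAt ℝ f z)
    (hg : DifferentiableAt ℝ g z) :
    wdz (fun w => f w * g w) z = wdz f z * g z + f z * wdz g z := by
  unfold wdz
  rw [fderiv_fun_mul hf hg]
  simp only [ContinuousLinearMap.add_apply, ContinuousLinearMap.smul_apply, smul_eq_mul]
  ring

lemma wdz_const_mul {f : ℂ → ℂ} {z : ℂ} (c : ℂ) (hf : DifferentiableAt ℝ f z) :
    wdz (fun w => c * f w) z = c * wdz f z := by
  unfold wdz
  rw [fderiv_const_mul hf c]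
  simp only [ContinuousLinearMap.smul_apply, smul_eq_mul]
  ring

lemma wdz_id (z : ℂ) : wdz (fun w => w) z = 1 := by
  unfold wdz
  rw [fderiv_id']
  simp [Complex.I_sq, Complex.ext_iff]

lemma contDiff_wdz {H : ℂ → ℂ} (hH : ContDiff ℝ (⊤ : ℕ∞) H) : ContDiff ℝ (⊤ : ℕ∞) (wdz H) := by
  have h1 : ContDiff ℝ (⊤ : ℕ∞) (fderiv ℝ H) := hH.fderiv_right (by simp)
  have e1 : ContDiff ℝ (⊤ : ℕ∞) (fun z => fderiv ℝ H z 1) :=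
    (ContinuousLinearMap.apply ℝ ℂ (1:ℂ)).contDiff.comp h1
  have e2 : ContDiff ℝ (⊤ : ℕ∞) (fun z => fderiv ℝ H z Complex.I) :=
    (ContinuousLinearMap.apply ℝ ℂ (Complex.I)).contDiff.comp h1
  exact ((e1.sub (contDiff_const.mul e2)).div_const 2)

lemma hcs_wdz {H : ℂ → ℂ} (hH : HasCompactSupport H) : HasCompactSupport (wdz H) := by
  have : wdz H = (fun L : ℂ →L[ℝ] ℂ => (L 1 - Complex.I * L Complex.I) / 2) ∘ (fderiv ℝ H) := rfl
  rw [this]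
  exact (hH.fderiv ℝ).comp_left (by simp)

lemma diffAt_inv_real {z : ℂ} (hz : z ≠ 0) : DifferentiableAt ℝ (fun w : ℂ => w⁻¹) z :=
  ((hasDerivAt_inv hz).differentiableAt).restrictScalars ℝ

lemma wdz_comp_inv {f : ℂ → ℂ} {z : ℂ} (hf : DifferentiableAt ℝ f z⁻¹) (hz : z ≠ 0) :
    wdz (fun w => f w⁻¹) z = -(z^2)⁻¹ * wdz f z⁻¹ := by
  have hinv : HasFDerivAt (fun w : ℂ => w⁻¹)
      (((1 : ℂ →L[ℂ] ℂ).smulRight (-(z^2)⁻¹)).restrictScalars ℝ) z :=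
    ((hasDerivAt_inv hz).hasFDerivAt).restrictScalars ℝ
  have hcomp : HasFDerivAt (fun w => f w⁻¹)
      ((fderiv ℝ f z⁻¹).comp (((1 : ℂ →L[ℂ] ℂ).smulRight (-(z^2)⁻¹)).restrictScalars ℝ)) z :=
    (hf.hasFDerivAt).comp z hinv
  rw [hcomp.wdz_eq]
  simp only [ContinuousLinearMap.coe_comp', Function.comp_apply,
    ContinuousLinearMap.coe_restrictScalars', ContinuousLinearMap.smulRight_apply,
    ContinuousLinearMap.one_apply, smul_eq_mul, one_mul]
  unfold wdz
  rw [show Complex.I * -(z^2)⁻¹ = (-(z^2)⁻¹) * Complex.I by ring]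
  rw [clin_key (fderiv ℝ f z⁻¹) (-(z^2)⁻¹)]
  ring

lemma diffAt_comp_inv {f : ℂ → ℂ} {z : ℂ} (hf : DifferentiableAt ℝ f z⁻¹) (hz : z ≠ 0) :
    DifferentiableAt ℝ (fun w : ℂ => f w⁻¹) z :=
  hf.comp z (diffAt_inv_real hz)

/-! ### The exponential factor -/

lemma hasFDerivAt_expE (ε z : ℂ) :
    HasFDerivAt (fun w : ℂ => Complex.exp (ε * Complex.I * (w + conj w)))
      ((((1 : ℂ →L[ℂ] ℂ).smulRight (Complex.exp (ε * Complex.I * (z + conj z)))).restrictScalars ℝ).comp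
        ((ε * Complex.I) • (ContinuousLinearMap.id ℝ ℂ + Complex.conjCLE.toContinuousLinearMap))) z := by
  set M := (ε * Complex.I) • (ContinuousLinearMap.id ℝ ℂ + Complex.conjCLE.toContinuousLinearMap) with hMdef
  have hM : HasFDerivAt (fun w : ℂ => ε * Complex.I * (w + conj w)) M z := by
    have h := M.hasFDerivAt (x := z)
    have heq : (fun w : ℂ => ε * Complex.I * (w + conj w)) = ⇑M := by
      ext w
      simp [hMdef, ContinuousLinearMap.smul_apply, smul_eq_mul]; ring
    rw [heq]; exact h
  exact ((Complex.hasDerivAt_exp _).hasFDerivAt.restrictScalars ℝ).comp z hM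

lemma diffAt_expE (ε z : ℂ) :
    DifferentiableAt ℝ (fun w : ℂ => Complex.exp (ε * Complex.I * (w + conj w))) z :=
  (hasFDerivAt_expE ε z).differentiableAt

lemma wdz_expE (ε z : ℂ) :
    wdz (fun w : ℂ => Complex.exp (ε * Complex.I * (w + conj w))) z
      = ε * Complex.I * Complex.exp (ε * Complex.I * (z + conj z)) := by
  rw [(hasFDerivAt_expE ε z).wdz_eq]
  simp only [ContinuousLinearMap.coe_comp', Function.comp_apply,
    ContinuousLinearMap.smul_apply, ContinuousLinearMap.add_apply,
    ContinuousLinearMap.coe_id', id_eq, ContinuousLinearEquiv.coe_coe,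
    ContinuousLinearMap.coe_restrictScalars', ContinuousLinearMap.smulRight_apply,
    ContinuousLinearMap.one_apply, smul_eq_mul]
  simp [Complex.conj_I]
  ring

/-! ### The `|z|⁻¹` factor -/

lemma hasFDerivAt_normSq (z : ℂ) :
    HasFDerivAt (fun w : ℂ => Complex.normSq w)
      (z.re • Complex.reCLM + z.re • Complex.reCLM + (z.im • Complex.imCLM + z.im • Complex.imCLM)) z := by
  have hre := Complex.reCLM.hasFDerivAt (x := z)
  have him := Complex.imCLM.hasFDerivAt (x := z)
  have h := (hre.mul hre).add (him.mul him)
  have heq : (fun w : ℂ => Complex.normSq w) = fun w : ℂ =>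
      Complex.reCLM w * Complex.reCLM w + Complex.imCLM w * Complex.imCLM w := by
    ext w; simp [Complex.normSq_apply]
  rw [heq]
  exact h

lemma hasFDerivAt_absC {z : ℂ} (hz : z ≠ 0) :
    HasFDerivAt (fun w : ℂ => ‖w‖)
      ((1 / (2 * Real.sqrt (Complex.normSq z))) • (z.re • Complex.reCLM + z.re • Complex.reCLM +
        (z.im • Complex.imCLM + z.im • Complex.imCLM))) z := by
  have hnsq : Complex.normSq z ≠ 0 := by simpa [Complex.normSq_eq_zero] using hz
  have h := (Real.hasDerivAt_sqrt hnsq).comp_hasFDerivAt z (hasFDerivAt_normSq z)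
  have heq : (fun w : ℂ => ‖w‖) = fun w : ℂ => Real.sqrt (Complex.normSq w) := by
    ext w; exact Complex.norm_def w
  rw [heq]
  exact h

lemma diffAt_absinv {z : ℂ} (hz : z ≠ 0) :
    DifferentiableAt ℝ (fun w : ℂ => ((‖w‖ : ℝ) : ℂ)⁻¹) z := by
  have habs : (‖z‖ : ℝ) ≠ 0 := norm_ne_zero_iff.mpr hz
  have h1 := (hasDerivAt_inv habs).comp_hasFDerivAt z (hasFDerivAt_absC hz)
  have h2 := Complex.ofRealCLM.hasFDerivAt.comp z h1
  have heq2 : (⇑Complex.ofRealCLM ∘ (fun y : ℝ => y⁻¹) ∘ (fun w : ℂ => ‖w‖))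
      = (fun w : ℂ => ((‖w‖ : ℝ) : ℂ)⁻¹) := by
    ext w; simp [Complex.ofRealCLM_apply, Complex.ofReal_inv]
  rw [heq2] at h2
  exact h2.differentiableAt

lemma wdz_absinv {z : ℂ} (hz : z ≠ 0) :
    wdz (fun w : ℂ => ((‖w‖ : ℝ) : ℂ)⁻¹) z
      = -(2:ℂ)⁻¹ * z⁻¹ * ((‖z‖ : ℝ) : ℂ)⁻¹ := by
  have habs : (‖z‖ : ℝ) ≠ 0 := norm_ne_zero_iff.mpr hz
  have h1 := (hasDerivAt_inv habs).comp_hasFDerivAt z (hasFDerivAt_absC hz)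
  have h2 := Complex.ofRealCLM.hasFDerivAt.comp z h1
  have heq2 : (⇑Complex.ofRealCLM ∘ (fun y : ℝ => y⁻¹) ∘ (fun w : ℂ => ‖w‖))
      = (fun w : ℂ => ((‖w‖ : ℝ) : ℂ)⁻¹) := by
    ext w; simp [Complex.ofRealCLM_apply, Complex.ofReal_inv]
  rw [heq2] at h2
  rw [h2.wdz_eq]
  have hsq : ((‖z‖ : ℝ) : ℂ)^2 = z * conj z := by
    rw [Complex.mul_conj]
    norm_cast
    exact Complex.sq_norm z
  simp only [ContinuousLinearMap.coe_comp', Function.comp_apply,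
    ContinuousLinearMap.coe_smul', Pi.smul_apply, ContinuousLinearMap.add_apply,
    ContinuousLinearMap.smul_apply, Complex.reCLM_apply, Complex.imCLM_apply,
    Complex.ofRealCLM_apply, smul_eq_mul, Complex.one_re, Complex.one_im,
    Complex.I_re, Complex.I_im, Complex.norm_def]
  push_cast
  have hx : z = (z.re:ℂ) + (z.im:ℂ) * Complex.I := (Complex.re_add_im z).symm
  have ha : ((‖z‖ : ℝ) : ℂ) ≠ 0 := by exact_mod_cast habs
  have hsqrt : Real.sqrt (Complex.normSq z) = ‖z‖ := (Complex.norm_def z).symm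
  rw [hsqrt]
  have hzc : z ≠ 0 := hz
  set a := ((‖z‖ : ℝ) : ℂ)
  have hconj : (starRingEnd ℂ) z = (z.re:ℂ) - (z.im:ℂ)*Complex.I := by
    simp [Complex.ext_iff]
  rw [hconj] at hsq
  field_simp
  linear_combination 2 * hsq

/-! ### The combined factor `Efun ε = exp(εi(z+z̄))·|z|⁻¹` -/

noncomputable def Efun (ε : ℂ) : ℂ → ℂ := fun w =>
  Complex.exp (ε * Complex.I * (w + conj w)) * ((‖w‖ : ℝ) : ℂ)⁻¹

lemma diffAt_Efun (ε : ℂ) {z : ℂ} (hz : z ≠ 0) : DifferentiableAt ℝ (Efun ε) z :=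
  (diffAt_expE ε z).mul (diffAt_absinv hz)

lemma wdz_Efun (ε : ℂ) {z : ℂ} (hz : z ≠ 0) :
    wdz (Efun ε) z = Efun ε z * (ε * Complex.I - (2*z)⁻¹) := by
  unfold Efun
  rw [wdz_mul (diffAt_expE ε z) (diffAt_absinv hz), wdz_expE, wdz_absinv hz]
  rw [mul_inv]
  ring

lemma diffAt_EfunH (ε : ℂ) {H : ℂ → ℂ} {z : ℂ} (hH : DifferentiableAt ℝ H z⁻¹) (hz : z ≠ 0) :
    DifferentiableAt ℝ (fun w => Efun ε w * H w⁻¹) z :=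
  (diffAt_Efun ε hz).mul (diffAt_comp_inv hH hz)

lemma wdz_EfunH (ε : ℂ) {H : ℂ → ℂ} {z : ℂ} (hH : DifferentiableAt ℝ H z⁻¹) (hz : z ≠ 0) :
    wdz (fun w => Efun ε w * H w⁻¹) z
      = Efun ε z * (ε * Complex.I * H z⁻¹ - (2*z)⁻¹ * H z⁻¹ - (z^2)⁻¹ * wdz H z⁻¹) := by
  rw [wdz_mul (diffAt_Efun ε hz) (diffAt_comp_inv hH hz), wdz_Efun ε hz, wdz_comp_inv hH hz]
  ring

/-! ### The inner function `Φ` and the main one-term computation -/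

noncomputable def Phi (ε : ℂ) (H : ℂ → ℂ) : ℂ → ℂ := fun w =>
  ε * Complex.I * (w * (Efun ε w * H w⁻¹)) + (-(1:ℂ)/2) * (Efun ε w * H w⁻¹) +
    (-1:ℂ) * (Efun ε w * (w⁻¹ * wdz H w⁻¹))

lemma diffAt_Phi (ε : ℂ) {H : ℂ → ℂ} {z : ℂ} (hH : ContDiff ℝ (⊤ : ℕ∞) H) (hz : z ≠ 0) :
    DifferentiableAt ℝ (Phi ε H) z := by
  have h1 : DifferentiableAt ℝ H z⁻¹ := (hH.differentiable (by simp)) z⁻¹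
  have hK : DifferentiableAt ℝ (fun u : ℂ => u * wdz H u) z⁻¹ :=
    differentiableAt_fun_id.mul (((contDiff_wdz hH).differentiable (by simp)) z⁻¹)
  exact ((((differentiableAt_const _).mul (differentiableAt_fun_id.mul
    (diffAt_EfunH ε h1 hz))).add ((differentiableAt_const _).mul (diffAt_EfunH ε h1 hz))).add
    ((differentiableAt_const _).mul ((diffAt_Efun ε hz).mul (diffAt_comp_inv hK hz))))

lemma inner_eq_Phi (ε : ℂ) {H : ℂ → ℂ} {z : ℂ} (hH : ContDiff ℝ (⊤ : ℕ∞) H) (hz : z ≠ 0) :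
    z * wdz (fun v => Efun ε v * H v⁻¹) z = Phi ε H z := by
  have h1 : DifferentiableAt ℝ H z⁻¹ := (hH.differentiable (by simp)) z⁻¹
  rw [wdz_EfunH ε h1 hz]
  unfold Phi
  have hz2 : z^2 ≠ 0 := pow_ne_zero _ hz
  field_simp
  ring

lemma wdz_Phi_eq (ε : ℂ) (hε : ε^2 = 1) {H : ℂ → ℂ} (hH : ContDiff ℝ (⊤ : ℕ∞) H) {z : ℂ} (hz : z ≠ 0) :
    z * wdz (Phi ε H) z + z^2 * (Efun ε z * H z⁻¹)
      = Efun ε z * ((z⁻¹)^2 * wdz (wdz H) z⁻¹ + (2*z⁻¹ - 2*ε*Complex.I) * wdz H z⁻¹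
          + H z⁻¹ / 4) := by
  have hdH : Differentiable ℝ H := hH.differentiable (by simp)
  have hH1 : ContDiff ℝ (⊤ : ℕ∞) (wdz H) := contDiff_wdz hH
  have hdH1 : Differentiable ℝ (wdz H) := hH1.differentiable (by simp)
  have h1 : DifferentiableAt ℝ H z⁻¹ := hdH z⁻¹
  have hKdiff : DifferentiableAt ℝ (fun u : ℂ => u * wdz H u) z⁻¹ :=
    differentiableAt_fun_id.mul (hdH1 z⁻¹)
  -- wdz of K at z⁻¹
  have hwK : wdz (fun u : ℂ => u * wdz H u) z⁻¹ = wdz H z⁻¹ + z⁻¹ * wdz (wdz H) z⁻¹ := by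
    rw [wdz_mul differentiableAt_fun_id (hdH1 z⁻¹), wdz_id]
    ring
  -- compute wdz (Phi ε H) z
  have hS1 : wdz (fun w => ε * Complex.I * (w * (Efun ε w * H w⁻¹))) z
      = ε * Complex.I * (Efun ε z * H z⁻¹ + z * wdz (fun w => Efun ε w * H w⁻¹) z) := by
    rw [wdz_const_mul _ (differentiableAt_fun_id.fun_mul (diffAt_EfunH ε h1 hz)),
      wdz_mul differentiableAt_fun_id (diffAt_EfunH ε h1 hz), wdz_id]
    ring
  have hS2 : wdz (fun w => (-(1:ℂ)/2) * (Efun ε w * H w⁻¹)) z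
      = (-(1:ℂ)/2) * wdz (fun w => Efun ε w * H w⁻¹) z :=
    wdz_const_mul _ (diffAt_EfunH ε h1 hz)
  have hS3 : wdz (fun w => (-1:ℂ) * (Efun ε w * (w⁻¹ * wdz H w⁻¹))) z
      = (-1:ℂ) * wdz (fun w => Efun ε w * (fun u : ℂ => u * wdz H u) w⁻¹) z := by
    exact wdz_const_mul _ ((diffAt_Efun ε hz).mul (diffAt_comp_inv hKdiff hz))
  have hPhi : wdz (Phi ε H) z
      = ε * Complex.I * (Efun ε z * H z⁻¹ + z * wdz (fun w => Efun ε w * H w⁻¹) z)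
        + (-(1:ℂ)/2) * wdz (fun w => Efun ε w * H w⁻¹) z
        + (-1:ℂ) * wdz (fun w => Efun ε w * (fun u : ℂ => u * wdz H u) w⁻¹) z := by
    unfold Phi
    rw [wdz_add (((differentiableAt_const _).fun_mul (differentiableAt_fun_id.fun_mul
        (diffAt_EfunH ε h1 hz))).fun_add ((differentiableAt_const _).fun_mul (diffAt_EfunH ε h1 hz)))
      ((differentiableAt_const _).fun_mul ((diffAt_Efun ε hz).fun_mul (diffAt_comp_inv hKdiff hz))),
      wdz_add ((differentiableAt_const _).fun_mul (differentiableAt_fun_id.fun_mul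
        (diffAt_EfunH ε h1 hz))) ((differentiableAt_const _).fun_mul (diffAt_EfunH ε h1 hz)),
      hS1, hS2, hS3]
  rw [hPhi, wdz_EfunH ε h1 hz, wdz_EfunH ε hKdiff hz, hwK]
  linear_combination (Complex.I^2 * z^2 * Efun ε z * H z⁻¹) * hε
    + (z^2 * Efun ε z * H z⁻¹) * Complex.I_sq
    + ((-(1:ℂ)/2) * ε * Complex.I * z * Efun ε z * H z⁻¹
        - ε * Complex.I * z * z⁻¹ * Efun ε z * wdz H z⁻¹
        + (1/4) * Efun ε z * H z⁻¹ + 2 * z⁻¹ * Efun ε z * wdz H z⁻¹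
        - 2 * ε * Complex.I * Efun ε z * wdz H z⁻¹
        + (z⁻¹)^2 * Efun ε z * wdz (wdz H) z⁻¹) * (mul_inv_cancel₀ hz)

/-! ### Final assembly -/

lemma Efun_one (w : ℂ) :
    Complex.exp (Complex.I * (w + conj w)) / ((‖w‖ : ℝ) : ℂ) = Efun 1 w := by
  unfold Efun
  rw [div_eq_mul_inv, one_mul]

lemma Efun_negone (w : ℂ) :
    Complex.exp (-(Complex.I * (w + conj w))) / ((‖w‖ : ℝ) : ℂ) = Efun (-1) w := by
  unfold Efun
  rw [div_eq_mul_inv, show (-1 : ℂ) * Complex.I * (w + conj w) = -(Complex.I * (w + conj w)) by ring]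

/-- The output function of `∇` on one component. -/
noncomputable def HHout (ε : ℂ) (H : ℂ → ℂ) : ℂ → ℂ := fun u =>
  u^2 * wdz (wdz H) u + (2*u - 2*ε*Complex.I) * wdz H u + H u / 4

lemma contDiff_HHout (ε : ℂ) {H : ℂ → ℂ} (hH : ContDiff ℝ (⊤ : ℕ∞) H) : ContDiff ℝ (⊤ : ℕ∞) (HHout ε H) := by
  unfold HHout
  refine ContDiff.add (ContDiff.add ?_ ?_) ?_
  · exact (contDiff_id.pow 2).mul (contDiff_wdz (contDiff_wdz hH))
  · exact ((contDiff_const.mul contDiff_id).sub contDiff_const).mul (contDiff_wdz hH)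
  · exact hH.div_const 4

lemma hcs_HHout (ε : ℂ) {H : ℂ → ℂ} (hH : HasCompactSupport H) :
    HasCompactSupport (HHout ε H) := by
  unfold HHout
  refine HasCompactSupport.add (HasCompactSupport.add ?_ ?_) ?_
  · exact HasCompactSupport.mul_left (f := fun u : ℂ => u^2) (hcs_wdz (hcs_wdz hH))
  · exact HasCompactSupport.mul_left (f := fun u : ℂ => 2*u - 2*ε*Complex.I) (hcs_wdz hH)
  · have : (fun u => H u / 4) = (fun u => H u * (4:ℂ)⁻¹) := by
      ext u; rw [div_eq_mul_inv]
    rw [this]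
    exact HasCompactSupport.mul_right (f' := fun _ : ℂ => (4:ℂ)⁻¹) hH

/-- `𝒱` is stable under `∇ = (z∂/∂z)² + z²`. -/
theorem memV_nabla (G : ℂ → ℂ) (hG : memV G) : memV (nabla G) := by
  obtain ⟨Hp, Hm, hp, hm, hcp, hcm, hGeq⟩ := hG
  have hGF : ∀ w : ℂ, w ≠ 0 → G w = Efun 1 w * Hp w⁻¹ + Efun (-1) w * Hm w⁻¹ := by
    intro w hw
    rw [hGeq w hw, Efun_one, Efun_negone]
  have hwdzG : ∀ w : ℂ, w ≠ 0 → wdz G w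
      = wdz (fun v => Efun 1 v * Hp v⁻¹) w + wdz (fun v => Efun (-1) v * Hm v⁻¹) w := by
    intro w hw
    have hev : G =ᶠ[nhds w] fun v => Efun 1 v * Hp v⁻¹ + Efun (-1) v * Hm v⁻¹ :=
      (eventually_ne_nhds hw).mono (fun v hv => hGF v hv)
    rw [wdz_congr hev,
      wdz_add (diffAt_EfunH 1 ((hp.differentiable (by simp)) w⁻¹) hw)
        (diffAt_EfunH (-1) ((hm.differentiable (by simp)) w⁻¹) hw)]
  refine ⟨HHout 1 Hp, HHout (-1) Hm, contDiff_HHout 1 hp, contDiff_HHout (-1) hm,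
    hcs_HHout 1 hcp, hcs_HHout (-1) hcm, ?_⟩
  intro z hz
  have hinner : (fun w => w * wdz G w) =ᶠ[nhds z] fun w => Phi 1 Hp w + Phi (-1) Hm w := by
    refine (eventually_ne_nhds hz).mono (fun w hw => ?_)
    show w * wdz G w = Phi 1 Hp w + Phi (-1) Hm w
    rw [hwdzG w hw, mul_add, inner_eq_Phi 1 hp hw, inner_eq_Phi (-1) hm hw]
  have hnabla : nabla G z = z * wdz (Phi 1 Hp) z + z * wdz (Phi (-1) Hm) z
      + z^2 * (Efun 1 z * Hp z⁻¹) + z^2 * (Efun (-1) z * Hm z⁻¹) := by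
    unfold nabla
    rw [wdz_congr hinner, wdz_add (diffAt_Phi 1 hp hz) (diffAt_Phi (-1) hm hz), hGF z hz]
    ring
  rw [hnabla, Efun_one, Efun_negone]
  have e1 : z * wdz (Phi 1 Hp) z + z^2 * (Efun 1 z * Hp z⁻¹) = Efun 1 z * HHout 1 Hp z⁻¹ := by
    rw [wdz_Phi_eq 1 (by norm_num) hp hz]
    unfold HHout
    ring
  have e2 : z * wdz (Phi (-1) Hm) z + z^2 * (Efun (-1) z * Hm z⁻¹)
      = Efun (-1) z * HHout (-1) Hm z⁻¹ := by
    rw [wdz_Phi_eq (-1) (by norm_num) hm hz]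
    unfold HHout
    ring
  linear_combination e1 + e2
end
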